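/- Let 0 < β < 1, let f be a nonnegative locally integrable function, h > 0, and let Q ∈ F_β be a cube with |Q|^{-1} ∫_Q f > h and 10Q ∈ F_β. Then there exist a dyadic cube P and a positive constant c₁ = 5^n/24^n, independent of Q, such that Q ⊂ 5P ⊂ 8Q, 5P ∈ F_β, and |P|^{-1} ∫_P f > c₁·h. -/

import Mathlib

open MeasureTheory Metric Set
open scoped ENNReal

noncomputable section

/-- The cube `Q(x,l)` with center `x` and half side length `l`, i.e. the closed
ball of radius `l` in the sup metric `d_∞` on `Fin n → ℝ`. -/
def Cube {n : ℕ} (x : Fin n → ℝ) (l : ℝ) : Set (Fin n → ℝ) :=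
  Metric.closedBall x l

/-- `Q(x,l)` belongs to the family `F_β` of cubes well inside `Ω`. -/
def MemF {n : ℕ} (Ω : Set (Fin n → ℝ)) (β : ℝ) (x : Fin n → ℝ) (l : ℝ) : Prop :=
  x ∈ Ω ∧ 0 < l ∧ l < β * Metric.infDist x Ωᶜ

/-- `w(E) = ∫_E w dx` for a weight `w`. -/
def wMeas {n : ℕ} (w : (Fin n → ℝ) → ℝ) (E : Set (Fin n → ℝ)) : ℝ≥0∞ :=
  ∫⁻ y in E, ENNReal.ofReal (w y)

/-- The average `|Q|⁻¹ ∫_Q |f|`. -/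
def avgI {n : ℕ} (f : (Fin n → ℝ) → ℝ) (Q : Set (Fin n → ℝ)) : ℝ≥0∞ :=
  (volume Q)⁻¹ * ∫⁻ y in Q, ENNReal.ofReal |f y|

/-- The local (uncentered) maximal function `M_β f`. -/
def locMax {n : ℕ} (Ω : Set (Fin n → ℝ)) (β : ℝ) (f : (Fin n → ℝ) → ℝ)
    (x : Fin n → ℝ) : ℝ≥0∞ :=
  ⨆ (c : Fin n → ℝ) (l : ℝ) (_ : MemF Ω β c l) (_ : x ∈ Cube c l), avgI f (Cube c l)

/-- The centered local maximal function `M_β^c f`. -/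
def locMaxC {n : ℕ} (Ω : Set (Fin n → ℝ)) (β : ℝ) (f : (Fin n → ℝ) → ℝ)
    (x : Fin n → ℝ) : ℝ≥0∞ :=
  ⨆ (l : ℝ) (_ : MemF Ω β x l), avgI f (Cube x l)

/-- A weight: a nonnegative (measurable) locally integrable function on `Ω`. -/
def IsWeight {n : ℕ} (Ω : Set (Fin n → ℝ)) (w : (Fin n → ℝ) → ℝ) : Prop :=
  (∀ x, 0 ≤ w x) ∧ Measurable w ∧ LocallyIntegrableOn w Ω

/-- `σ = v^{1-p'} = v^{-1/(p-1)}`. -/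
def sigW {n : ℕ} (v : (Fin n → ℝ) → ℝ) (p : ℝ) : (Fin n → ℝ) → ℝ :=
  fun y => v y ^ (-(1 / (p - 1)))

/-- The class `A_{p,q}^β`: `(u(Q)/|Q|)^{p/q} (σ(Q)/|Q|)^{p-1} ≤ C` for `Q ∈ F_β`. -/
def Apq {n : ℕ} (Ω : Set (Fin n → ℝ)) (β p q : ℝ) (u v : (Fin n → ℝ) → ℝ) : Prop :=
  ∃ C : ℝ≥0∞, C ≠ ⊤ ∧ ∀ x l, MemF Ω β x l →
    (wMeas u (Cube x l) / volume (Cube x l)) ^ (p / q) *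
      (wMeas (sigW v p) (Cube x l) / volume (Cube x l)) ^ (p - 1) ≤ C

/-- The class `D_β`: `w(2Q) ≤ C w(Q) < ∞` for all `Q ∈ F_β` with `2Q ∈ F_β`. -/
def Dbeta {n : ℕ} (Ω : Set (Fin n → ℝ)) (β : ℝ) (w : (Fin n → ℝ) → ℝ) : Prop :=
  ∃ C : ℝ≥0∞, C ≠ ⊤ ∧ ∀ x l, MemF Ω β x l → MemF Ω β x (2 * l) →
    wMeas w (Cube x (2 * l)) ≤ C * wMeas w (Cube x l) ∧ wMeas w (Cube x l) < ⊤

/-- The class `A_∞^β`: `w(E)/w(Q) ≤ c (|E|/|Q|)^δ` for measurable `E ⊆ Q ∈ F_β`. -/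
def AinfB {n : ℕ} (Ω : Set (Fin n → ℝ)) (β : ℝ) (w : (Fin n → ℝ) → ℝ) : Prop :=
  ∃ c δ : ℝ, 0 < c ∧ 0 < δ ∧ ∀ x l, MemF Ω β x l → ∀ E : Set (Fin n → ℝ),
    MeasurableSet E → E ⊆ Cube x l →
    wMeas w E ≤ ENNReal.ofReal c * (volume E / volume (Cube x l)) ^ δ * wMeas w (Cube x l)

/-- `M_β : L^p(v) → L^q(u)` is bounded. -/
def MaxBdd {n : ℕ} (Ω : Set (Fin n → ℝ)) (β p q : ℝ) (u v : (Fin n → ℝ) → ℝ) : Prop :=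
  ∃ C : ℝ≥0∞, C ≠ ⊤ ∧ ∀ f : (Fin n → ℝ) → ℝ,
    (∫⁻ x in Ω, (locMax Ω β f x) ^ q * ENNReal.ofReal (u x)) ^ (1 / q)
      ≤ C * (∫⁻ x in Ω, ENNReal.ofReal |f x| ^ p * ENNReal.ofReal (v x)) ^ (1 / p)

/-- `M_β^c : L^p(v) → L^q(u)` is bounded. -/
def MaxCBdd {n : ℕ} (Ω : Set (Fin n → ℝ)) (β p q : ℝ) (u v : (Fin n → ℝ) → ℝ) : Prop :=
  ∃ C : ℝ≥0∞, C ≠ ⊤ ∧ ∀ f : (Fin n → ℝ) → ℝ,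
    (∫⁻ x in Ω, (locMaxC Ω β f x) ^ q * ENNReal.ofReal (u x)) ^ (1 / q)
      ≤ C * (∫⁻ x in Ω, ENNReal.ofReal |f x| ^ p * ENNReal.ofReal (v x)) ^ (1 / p)

/-- The cloud `N_β(Q)` of the cube `Q = Q(x,l)`. -/
def cloud {n : ℕ} (Ω : Set (Fin n → ℝ)) (β : ℝ) (x : Fin n → ℝ) (l : ℝ) :
    Set (Fin n → ℝ) :=
  ⋃ (c : Fin n → ℝ) (r : ℝ) (_ : MemF Ω β c r)
    (_ : (Cube c r ∩ Cube x l).Nonempty), Cube c r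

/-- The center of the usual dyadic cube of side `2^(k+1)` indexed by `z`. -/
def dyCenter {n : ℕ} (k : ℤ) (z : Fin n → ℤ) : Fin n → ℝ :=
  fun i => (2 * (z i : ℝ) + 1) * (2:ℝ) ^ k

/-- The usual (half-open) dyadic cube of side `2^(k+1)` indexed by `z`;
its center is `dyCenter k z` and its half side length is `2^k`. -/
def dyCube {n : ℕ} (k : ℤ) (z : Fin n → ℤ) : Set (Fin n → ℝ) :=
  Set.univ.pi fun i => Ico ((z i : ℝ) * 2 ^ (k + 1)) (((z i : ℝ) + 1) * 2 ^ (k + 1))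

/-- `Q(x,l)` is a usual dyadic cube of `ℝ^n`. -/
def IsDyadic {n : ℕ} (x : Fin n → ℝ) (l : ℝ) : Prop :=
  ∃ (k : ℤ) (z : Fin n → ℤ), l = (2:ℝ) ^ k ∧ x = dyCenter k z

/-- `W` is a covering `W_t` of `Ω` as in the covering lemma: a covering of `Ω`
by pairwise disjoint dyadic cubes `R ∈ F_β` with `10R ∈ F_β` and
`2^{-t-3} d(x_R,Ω^c) ≤ l_R ≤ 2^{-t-1} d(x_R,Ω^c)`, and such that at most `M`
cubes of `W` meet the cloud of any `Q ∈ F_β` with `10Q ∉ F_β`. -/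
def IsWt {n : ℕ} (Ω : Set (Fin n → ℝ)) (β : ℝ) (t : ℕ)
    (W : Set (ℤ × (Fin n → ℤ))) : Prop :=
  (Ω ⊆ ⋃ q ∈ W, dyCube q.1 q.2) ∧
  (W.PairwiseDisjoint fun q => dyCube q.1 q.2) ∧
  (∀ q ∈ W, MemF Ω β (dyCenter q.1 q.2) ((2:ℝ) ^ q.1) ∧
    MemF Ω β (dyCenter q.1 q.2) (10 * (2:ℝ) ^ q.1) ∧
    (2:ℝ) ^ (-(t:ℤ) - 3) * Metric.infDist (dyCenter q.1 q.2) Ωᶜ ≤ (2:ℝ) ^ q.1 ∧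
    (2:ℝ) ^ q.1 ≤ (2:ℝ) ^ (-(t:ℤ) - 1) * Metric.infDist (dyCenter q.1 q.2) Ωᶜ) ∧
  (∃ M : ℕ, ∀ x l, MemF Ω β x l → ¬ MemF Ω β x (10 * l) →
    {q ∈ W | (dyCube q.1 q.2 ∩ cloud Ω β x l).Nonempty}.Finite ∧
    {q ∈ W | (dyCube q.1 q.2 ∩ cloud Ω β x l).Nonempty}.ncard ≤ M)

/-- `W_{t,Q}`: the union of the cubes of `W` meeting the cloud of `Q = Q(x,l)`. -/
def WtQ {n : ℕ} (Ω : Set (Fin n → ℝ)) (β : ℝ) (W : Set (ℤ × (Fin n → ℤ)))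
    (x : Fin n → ℝ) (l : ℝ) : Set (Fin n → ℝ) :=
  ⋃ q ∈ {q ∈ W | (dyCube q.1 q.2 ∩ cloud Ω β x l).Nonempty}, dyCube q.1 q.2

/-!
With `2 ^ k ≤ l < 2 ^ (k + 1)`, the cube `Q = Q(x, l)` is covered by `3 ^ n` dyadic cubes of
half side `2 ^ k`, so one of them, `R`, meets `Q` and carries at least `3 ^ (-n)` of `∫_Q |f|`.
For `P` the closed cube with the center and half side of `R`, `|P| ≤ |Q|` gives
`avg_P ≥ 3 ^ (-n) avg_Q > 3 ^ (-n) h ≥ (5 / 24) ^ n h`. Since `R` meets `Q`, the centers are at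
distance at most `l + 2 ^ k < 3 l`, which yields `Q ⊆ 5P ⊆ 8Q`, and `5P ∈ F_β` because `10Q ∈ F_β`
and `d(·, Ωᶜ)` is `1`-Lipschitz.
-/

lemma dyCube_subset_cube {n : ℕ} (k : ℤ) (z : Fin n → ℤ) :
    dyCube k z ⊆ Cube (dyCenter k z) ((2:ℝ) ^ k) := by
  intro y hy
  have h2 : (2:ℝ) ^ (k + 1) = 2 * 2 ^ k := by rw [zpow_add_one₀ two_ne_zero, mul_comm]
  simp only [dyCube, Set.mem_pi, Set.mem_univ, forall_true_left, Set.mem_Ico, h2] at hy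
  refine (dist_pi_le_iff (by positivity)).2 fun i => ?_
  obtain ⟨hlo, hhi⟩ := hy i
  rw [dyCenter, Real.dist_eq, abs_le]
  constructor <;> linarith

lemma mem_dyCube_floor {n : ℕ} (k : ℤ) (y : Fin n → ℝ) :
    y ∈ dyCube k (fun i => ⌊y i / 2 ^ (k + 1)⌋) := by
  have hs : (0:ℝ) < 2 ^ (k + 1) := by positivity
  simp only [dyCube, Set.mem_pi, Set.mem_univ, forall_true_left, Set.mem_Ico]
  exact fun i => ⟨(le_div_iff₀ hs).1 (Int.floor_le _), (div_lt_iff₀ hs).1 (Int.lt_floor_add_one _)⟩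

lemma floor_div_le_floor_div_add_two {s t u : ℝ} (hs : 0 < s) (hu : u ≤ t + 2 * s) :
    ⌊u / s⌋ ≤ ⌊t / s⌋ + 2 := by
  have : u / s ≤ t / s + 2 := by
    rw [div_add' _ _ _ hs.ne']
    gcongr
  simpa using Int.floor_le_floor this

lemma cube_subset_biUnion_dyCube {n : ℕ} {k : ℤ} {l : ℝ} (hl : l ≤ 2 ^ (k + 1))
    (x : Fin n → ℝ) :
    Cube x l ⊆ ⋃ z ∈ Finset.Icc (fun i => ⌊(x i - l) / 2 ^ (k + 1)⌋)
      ((fun i => ⌊(x i - l) / 2 ^ (k + 1)⌋) + 2), dyCube k z := by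
  intro y hy
  have hyx : ∀ i, |y i - x i| ≤ l := fun i => (Real.dist_eq _ _ ▸ dist_le_pi_dist y x i).trans hy
  refine Set.mem_biUnion (Finset.mem_coe.2 (Finset.mem_Icc.2 ⟨fun i => ?_, fun i => ?_⟩))
    (mem_dyCube_floor k y)
  · exact Int.floor_le_floor (by gcongr; linarith [(abs_le.1 (hyx i)).1])
  · exact floor_div_le_floor_div_add_two (by positivity) (by linarith [(abs_le.1 (hyx i)).2])

lemma card_Icc_add_two {ι : Type*} [Fintype ι] [DecidableEq ι] (m : ι → ℤ) :
    (Finset.Icc m (m + 2)).card = 3 ^ Fintype.card ι := by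
  have h3 : ∀ i, (m i + 2 + 1 - m i).toNat = 3 := fun i => by omega
  simp [Pi.card_Icc, Int.card_Icc, h3]

lemma exists_lintegral_le_card_mul {α ι : Type*} [MeasurableSpace α] {μ : Measure α}
    {F : α → ℝ≥0∞} {Q : Set α} (hF : ∫⁻ y in Q, F y ∂μ ≠ 0) (S : Finset ι) (A : ι → Set α)
    (hQ : Q ⊆ ⋃ i ∈ S, A i) :
    ∃ i ∈ S, (A i ∩ Q).Nonempty ∧
      ∫⁻ y in Q, F y ∂μ ≤ S.card * ∫⁻ y in A i ∩ Q, F y ∂μ := by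
  have hsum : ∫⁻ y in Q, F y ∂μ ≤ ∑ i ∈ S, ∫⁻ y in A i ∩ Q, F y ∂μ := by
    have hQ' : Q ⊆ ⋃ i : S, A i ∩ Q := fun y hy => by
      obtain ⟨i, hi, hyi⟩ := Set.mem_iUnion₂.1 (hQ hy)
      exact Set.mem_iUnion.2 ⟨⟨i, hi⟩, hyi, hy⟩
    calc ∫⁻ y in Q, F y ∂μ ≤ ∫⁻ y in ⋃ i : S, A i ∩ Q, F y ∂μ := lintegral_mono_set hQ'
      _ ≤ ∑' i : S, ∫⁻ y in A i ∩ Q, F y ∂μ := lintegral_iUnion_le _ _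
      _ = ∑ i ∈ S, ∫⁻ y in A i ∩ Q, F y ∂μ := by rw [tsum_fintype]; exact Finset.sum_coe_sort S fun i => ∫⁻ y in A i ∩ Q, F y ∂μ
  have hS : S.Nonempty := Finset.nonempty_iff_ne_empty.2 fun h => hF <| by simpa [h] using hsum
  obtain ⟨i, hi, hmax⟩ := S.exists_max_image (fun i => ∫⁻ y in A i ∩ Q, F y ∂μ) hS
  have hle : ∫⁻ y in Q, F y ∂μ ≤ S.card * ∫⁻ y in A i ∩ Q, F y ∂μ := by
    simpa using hsum.trans (Finset.sum_le_card_nsmul S _ _ hmax)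
  refine ⟨i, hi, Set.nonempty_iff_ne_empty.2 fun h => hF ?_, hle⟩
  simpa [h] using hle

lemma volume_cube_mono {n : ℕ} {a l : ℝ} (ha : 0 ≤ a) (hal : a ≤ l) (y x : Fin n → ℝ) :
    volume (Cube y a) ≤ volume (Cube x l) := by
  rw [Cube, Cube, Real.volume_pi_closedBall y ha, Real.volume_pi_closedBall x (ha.trans hal)]
  gcongr

lemma avgI_le_mul_avgI {n : ℕ} {f : (Fin n → ℝ) → ℝ} {P Q : Set (Fin n → ℝ)} {C : ℝ≥0∞}
    (hvol : volume P ≤ volume Q)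
    (hint : ∫⁻ y in Q, ENNReal.ofReal |f y| ≤ C * ∫⁻ y in P, ENNReal.ofReal |f y|) :
    avgI f Q ≤ C * avgI f P := by
  rw [avgI, avgI, mul_left_comm]
  gcongr

lemma lintegral_ne_zero_of_lt_avgI {n : ℕ} {f : (Fin n → ℝ) → ℝ} {Q : Set (Fin n → ℝ)}
    {c : ℝ≥0∞} (hc : c < avgI f Q) : ∫⁻ y in Q, ENNReal.ofReal |f y| ≠ 0 := fun h0 => by
  simp [avgI, h0] at hc

lemma MemF.of_add_mul_dist_le {n : ℕ} {Ω : Set (Fin n → ℝ)} {β L r : ℝ} {x y : Fin n → ℝ}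
    (hx : MemF Ω β x L) (hr : 0 < r) (hry : r + β * dist x y ≤ L) : MemF Ω β y r := by
  obtain ⟨-, hL, hLd⟩ := hx
  have hβ : 0 ≤ β := le_of_lt <| pos_of_mul_pos_left (hL.trans hLd) infDist_nonneg
  have htri : β * infDist x Ωᶜ ≤ β * infDist y Ωᶜ + β * dist x y := by
    rw [← mul_add]
    exact mul_le_mul_of_nonneg_left infDist_le_infDist_add_dist hβ
  have hry' : r < β * infDist y Ωᶜ := by linarith
  have hyΩ : y ∈ Ω := by
    by_contra hy
    rw [infDist_zero_of_mem (Set.mem_compl hy), mul_zero] at hry'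
    linarith
  exact ⟨hyΩ, hr, hry'⟩

lemma dist_dyCenter_le_of_inter_nonempty {n : ℕ} {k : ℤ} {z : Fin n → ℤ} {x : Fin n → ℝ} {l : ℝ}
    (h : (dyCube k z ∩ Cube x l).Nonempty) : dist x (dyCenter k z) ≤ l + 2 ^ k := by
  obtain ⟨y, hyP, hyQ⟩ := h
  calc dist x (dyCenter k z) ≤ dist y x + dist y (dyCenter k z) := dist_triangle_left _ _ _
    _ ≤ l + 2 ^ k := add_le_add hyQ (dyCube_subset_cube k z hyP)

lemma ofReal_mul_le_div_three_pow (n : ℕ) (h : ℝ) :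
    ENNReal.ofReal ((5 ^ n / 24 ^ n) * h) ≤ ENNReal.ofReal h / 3 ^ n := by
  have h3 : (3:ℝ≥0∞) ^ n = ENNReal.ofReal (3 ^ n) := by
    rw [ENNReal.ofReal_pow (by norm_num), ENNReal.ofReal_ofNat]
  rw [h3, ← ENNReal.ofReal_div_of_pos (by positivity), ENNReal.ofReal_le_ofReal_iff']
  have hc : (5:ℝ) ^ n / 24 ^ n ≤ 1 / 3 ^ n := by
    rw [← div_pow, one_div, ← inv_pow]
    exact pow_le_pow_left₀ (by norm_num) (by norm_num) n
  rcases le_or_gt 0 h with hh | hh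
  · left
    calc (5:ℝ) ^ n / 24 ^ n * h ≤ 1 / 3 ^ n * h := mul_le_mul_of_nonneg_right hc hh
      _ = h / 3 ^ n := by ring
  · exact Or.inr (mul_nonpos_of_nonneg_of_nonpos (by positivity) hh.le)

theorem calderon_zygmund_selection_inside_general {n : ℕ} (Ω : Set (Fin n → ℝ))
    (β : ℝ) (hβ1 : β < 1)
    (f : (Fin n → ℝ) → ℝ)
    (h : ℝ)
    (x : Fin n → ℝ) (l : ℝ) (hQ : MemF Ω β x l)
    (h10Q : MemF Ω β x (10 * l))
    (havg : ENNReal.ofReal h < avgI f (Cube x l)) :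
    ∃ (xP : Fin n → ℝ) (lP : ℝ), IsDyadic xP lP ∧
      Cube x l ⊆ Cube xP (5 * lP) ∧
      Cube xP (5 * lP) ⊆ Cube x (8 * l) ∧
      MemF Ω β xP (5 * lP) ∧
      ENNReal.ofReal ((5 ^ n / 24 ^ n) * h) < avgI f (Cube xP lP) := by
  set k := Int.log 2 l
  have hal : (2:ℝ) ^ k ≤ l := mod_cast Int.zpow_log_le_self one_lt_two hQ.2.1
  have hla : l < 2 ^ (k + 1) := mod_cast Int.lt_zpow_succ_log_self one_lt_two l
  have hla' : l < 2 * 2 ^ k := by rwa [zpow_add_one₀ two_ne_zero, mul_comm] at hla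
  obtain ⟨z, -, hmeet, hint⟩ := exists_lintegral_le_card_mul (lintegral_ne_zero_of_lt_avgI havg)
    _ _ (cube_subset_biUnion_dyCube hla.le x)
  rw [card_Icc_add_two, Fintype.card_fin, Nat.cast_pow, Nat.cast_ofNat] at hint
  have hdist := dist_dyCenter_le_of_inter_nonempty hmeet
  have hβdist : β * dist x (dyCenter k z) ≤ dist x (dyCenter k z) :=
    mul_le_of_le_one_left dist_nonneg hβ1.le
  have hP : avgI f (Cube x l) ≤ 3 ^ n * avgI f (Cube (dyCenter k z) (2 ^ k)) :=
    avgI_le_mul_avgI (volume_cube_mono (by positivity) hal _ _) <| hint.trans <| by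
      gcongr
      exact Set.inter_subset_left.trans (dyCube_subset_cube k z)
  refine ⟨dyCenter k z, 2 ^ k, ⟨k, z, rfl, rfl⟩, ?_, ?_, ?_, ?_⟩
  · exact closedBall_subset_closedBall' (by linarith)
  · exact closedBall_subset_closedBall' (by rw [dist_comm]; linarith)
  · exact h10Q.of_add_mul_dist_le (by positivity) (by linarith)
  · calc ENNReal.ofReal ((5 ^ n / 24 ^ n) * h) ≤ ENNReal.ofReal h / 3 ^ n :=
          ofReal_mul_le_div_three_pow n h
      _ < avgI f (Cube x l) / 3 ^ n := ENNReal.div_lt_div_right (by simp) (by simp) havg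
      _ ≤ _ := ENNReal.div_le_of_le_mul' hP

/-- Lemma 2.7 (i): if `|Q|⁻¹∫_Q f > h` and `10Q ∈ F_β`, then
there is a dyadic cube `P` with `Q ⊆ 5P ⊆ 8Q`, `5P ∈ F_β` and
`|P|⁻¹∫_P f > (5^n/24^n) h`. -/
theorem calderon_zygmund_selection_inside {n : ℕ} (Ω : Set (Fin n → ℝ))
    (hΩo : IsOpen Ω) (hΩne : Ω.Nonempty) (hΩpr : Ω ≠ Set.univ)
    (β : ℝ) (hβ0 : 0 < β) (hβ1 : β < 1)
    (f : (Fin n → ℝ) → ℝ) (hf0 : ∀ y, 0 ≤ f y)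
    (hfl : LocallyIntegrableOn f Ω)
    (h : ℝ) (hh : 0 < h)
    (x : Fin n → ℝ) (l : ℝ) (hQ : MemF Ω β x l)
    (h10Q : MemF Ω β x (10 * l))
    (havg : ENNReal.ofReal h < avgI f (Cube x l)) :
    ∃ (xP : Fin n → ℝ) (lP : ℝ), IsDyadic xP lP ∧
      Cube x l ⊆ Cube xP (5 * lP) ∧
      Cube xP (5 * lP) ⊆ Cube x (8 * l) ∧
      MemF Ω β xP (5 * lP) ∧
      ENNReal.ofReal ((5 ^ n / 24 ^ n) * h) < avgI f (Cube xP lP) :=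
  calderon_zygmund_selection_inside_general Ω β hβ1 f h x l hQ h10Q havg
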